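/- Let an (n,M₁,M₂) code for the DM-MAC with degraded message sets be constant-composition with common joint type P, i.e., all codeword pairs (f₁(m₁,m₂), f₂(m₂)) have the same empirical joint distribution P on 𝒳₁×𝒳₂. Then for every γ > 0 and every pair (x₁,x₂) ∈ 𝒳₁ⁿ×𝒳₂ⁿ of joint type P, the average error probability satisfies ε_n ≥ 1 − Pr[ (1/n) Σ_{i=1}^n j(x_{1,i}, x_{2,i}, Y_i) ≥ ((1/n)log M₁, (1/n)log M₁ + (1/n)log M₂) − γ(1,1) ] − 2e^{−nγ}, where the inequality inside the probability is componentwise, Y ∼ Wⁿ(·|x₁,x₂), and the information density vector j is defined with respect to P; moreover this probability is the same for every (x₁,x₂) of joint type P. -/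

import Mathlib

open MeasureTheory ProbabilityTheory Filter
open scoped Classical BigOperators

noncomputable section

/-- A function on a finite alphabet is a probability distribution. -/
def IsDist {A : Type} [Fintype A] (P : A → ℝ) : Prop :=
  (∀ a, 0 ≤ P a) ∧ ∑ a, P a = 1

variable {X1 X2 Y : Type} [Fintype X1] [Fintype X2] [Fintype Y]

/-- The `n`-letter memoryless extension of the channel `W`. -/
def Wn (W : X1 → X2 → Y → ℝ) (n : ℕ) (x1 : Fin n → X1) (x2 : Fin n → X2)
    (y : Fin n → Y) : ℝ := ∏ i, W (x1 i) (x2 i) (y i)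

/-- An `(n, M1, M2)` code for the MAC with degraded message sets. -/
structure MACCode (X1 X2 Y : Type) (n M1 M2 : ℕ) where
  f1 : Fin M1 × Fin M2 → Fin n → X1
  f2 : Fin M2 → Fin n → X2
  dec : (Fin n → Y) → Fin M1 × Fin M2

/-- Error probability of the code for a fixed message pair `m`. -/
def errProb (W : X1 → X2 → Y → ℝ) {n M1 M2 : ℕ} (c : MACCode X1 X2 Y n M1 M2)
    (m : Fin M1 × Fin M2) : ℝ :=
  ∑ y : Fin n → Y, if c.dec y ≠ m then Wn W n (c.f1 m) (c.f2 m.2) y else 0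

/-- Average error probability of a code. -/
def avgErr (W : X1 → X2 → Y → ℝ) {n M1 M2 : ℕ} (c : MACCode X1 X2 Y n M1 M2) : ℝ :=
  (1 / ((M1 : ℝ) * (M2 : ℝ))) * ∑ m : Fin M1 × Fin M2, errProb W c m

/-- Output distribution `P_Y` induced by the input distribution `P` and the channel `W`. -/
def PYdist (W : X1 → X2 → Y → ℝ) (P : X1 × X2 → ℝ) (y : Y) : ℝ :=
  ∑ x : X1 × X2, P x * W x.1 x.2 y

/-- Conditional output distribution `P_{Y|X2}`. -/
def PYgX2 (W : X1 → X2 → Y → ℝ) (P : X1 × X2 → ℝ) (x2 : X2) (y : Y) : ℝ :=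
  (∑ x1, P (x1, x2) * W x1 x2 y) / (∑ x1, P (x1, x2))

/-- First information density `j₁(x₁,x₂,y) = log (W(y|x₁,x₂) / P_{Y|X₂}(y|x₂))`. -/
def j1 (W : X1 → X2 → Y → ℝ) (P : X1 × X2 → ℝ) (x1 : X1) (x2 : X2) (y : Y) : ℝ :=
  Real.log (W x1 x2 y / PYgX2 W P x2 y)

/-- Second information density `j₁₂(x₁,x₂,y) = log (W(y|x₁,x₂) / P_Y(y))`. -/
def j12 (W : X1 → X2 → Y → ℝ) (P : X1 × X2 → ℝ) (x1 : X1) (x2 : X2) (y : Y) : ℝ :=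
  Real.log (W x1 x2 y / PYdist W P y)

/-- The information density vector. -/
def jv (W : X1 → X2 → Y → ℝ) (P : X1 × X2 → ℝ) (x1 : X1) (x2 : X2) (y : Y) :
    Fin 2 → ℝ := ![j1 W P x1 x2 y, j12 W P x1 x2 y]

/-- Mutual information `I₁(P) = I(X₁;Y|X₂)`. -/
def I1 (W : X1 → X2 → Y → ℝ) (P : X1 × X2 → ℝ) : ℝ :=
  ∑ x : X1 × X2, ∑ y, P x * W x.1 x.2 y * j1 W P x.1 x.2 y

/-- Mutual information `I₁₂(P) = I(X₁,X₂;Y)`. -/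
def I12 (W : X1 → X2 → Y → ℝ) (P : X1 × X2 → ℝ) : ℝ :=
  ∑ x : X1 × X2, ∑ y, P x * W x.1 x.2 y * j12 W P x.1 x.2 y

/-- Conditional mean of the information density vector given `(x₁,x₂)`. -/
def condMean (W : X1 → X2 → Y → ℝ) (P : X1 × X2 → ℝ) (x1 : X1) (x2 : X2)
    (a : Fin 2) : ℝ := ∑ y, W x1 x2 y * jv W P x1 x2 y a

/-- Dispersion matrix `V(P) = E[Cov(j(X₁,X₂,Y) | X₁,X₂)]`. -/
def Vmat (W : X1 → X2 → Y → ℝ) (P : X1 × X2 → ℝ) : Matrix (Fin 2) (Fin 2) ℝ :=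
  fun a b => ∑ x : X1 × X2, P x * ∑ y, W x.1 x.2 y *
    ((jv W P x.1 x.2 y a - condMean W P x.1 x.2 a) *
     (jv W P x.1 x.2 y b - condMean W P x.1 x.2 b))

/-- The capacity region of the DM-MAC with degraded message sets. -/
def CapRegion (W : X1 → X2 → Y → ℝ) : Set (ℝ × ℝ) :=
  {R | 0 ≤ R.1 ∧ 0 ≤ R.2 ∧ ∃ P : X1 × X2 → ℝ, IsDist P ∧
    R.1 ≤ I1 W P ∧ R.1 + R.2 ≤ I12 W P}

end

noncomputable section

/-- The standard Gaussian measure on `ℝ²`. -/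
def stdGaussian2 : Measure (Fin 2 → ℝ) :=
  MeasureTheory.Measure.pi fun _ => gaussianReal 0 1

/-- `Ψ(z; V)`: probability that a centered Gaussian vector with covariance `V`
(the law of `V^{1/2} Z` for standard Gaussian `Z`) lies in `{u : u₁ ≤ z₁, u₂ ≤ z₂}`. -/
def Psi (V : Matrix (Fin 2) (Fin 2) ℝ) (z : ℝ × ℝ) : ℝ :=
  if hV : V.PosSemidef then
    ((stdGaussian2.map (fun u => ((hV.1.eigenvectorUnitary : Matrix (Fin 2) (Fin 2) ℝ) *
      Matrix.diagonal ((RCLike.ofReal : ℝ → ℝ) ∘ (fun x => Real.sqrt x) ∘ hV.1.eigenvalues) *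
      (star hV.1.eigenvectorUnitary : Matrix (Fin 2) (Fin 2) ℝ)).mulVec u)) {w | w 0 ≤ z.1 ∧ w 1 ≤ z.2}).toReal
  else 0

/-- `Ψ⁻¹(V, ε) = {z ∈ ℝ² : Ψ(-z₁, -z₂; V) ≥ 1 - ε}`. -/
def PsiInv (V : Matrix (Fin 2) (Fin 2) ℝ) (ε : ℝ) : Set (ℝ × ℝ) :=
  {z | 1 - ε ≤ Psi V (-z.1, -z.2)}

/-- The standard normal CDF `Φ`. -/
def Phi (x : ℝ) : ℝ := ((gaussianReal 0 1) (Set.Iic x)).toReal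

/-- The inverse `Φ⁻¹` of the standard normal CDF. -/
def PhiInv (ε : ℝ) : ℝ := sSup {x | Phi x ≤ ε}

end
noncomputable section
variable {X1 X2 Y : Type} [Fintype X1] [Fintype X2] [Fintype Y]

/-- Empirical joint distribution (joint type) of a pair of sequences. -/
def empDist {n : ℕ} (x1 : Fin n → X1) (x2 : Fin n → X2) : X1 × X2 → ℝ :=
  fun a => ((Finset.univ.filter fun i : Fin n => (x1 i, x2 i) = a).card : ℝ) / n

/-- The probability, under `Y ∼ Wⁿ(·|x₁,x₂)`, that the normalized sums of the two
information densities componentwise exceed the rates minus `γ`. -/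
def vhProb (W : X1 → X2 → Y → ℝ) (P : X1 × X2 → ℝ) (n M1 M2 : ℕ) (γ : ℝ)
    (x1 : Fin n → X1) (x2 : Fin n → X2) : ℝ :=
  ∑ y : Fin n → Y,
    if ((1 / (n : ℝ)) * Real.log M1 - γ ≤ (1 / (n : ℝ)) * ∑ i, j1 W P (x1 i) (x2 i) (y i) ∧
        (1 / (n : ℝ)) * Real.log M1 + (1 / (n : ℝ)) * Real.log M2 - γ ≤
          (1 / (n : ℝ)) * ∑ i, j12 W P (x1 i) (x2 i) (y i))
    then Wn W n x1 x2 y else 0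

set_option linter.unusedSectionVars false

/-! Given message `m`, the output is either decoded wrongly, or decoded to `m` while one of the
two information-density sums is below its threshold, or both sums are above their thresholds;
the last event has probability `vhProb`, which depends on the codeword pair only through its
joint type `P`. If `y` is decoded to `m = (m₁, m₂)` and `∑ᵢ j₁ < log M₁ - nγ`, then
`Wⁿ(y|x(m)) ≤ M₁ e^{-nγ} ∏ᵢ P_{Y|X₂}(yᵢ|x₂ᵢ(m₂))`. For fixed `m₂` the decoding sets of the
messages `(m₁, m₂)` are disjoint and the right-hand side is a probability distribution in `y`, so
these events have total probability at most `M₁ M₂ e^{-nγ}` over all messages; the same change of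
measure with `P_Yⁿ` handles the sum rate. Averaging over the messages gives the bound. -/

lemma IsDist.nonempty {A : Type} [Fintype A] {p : A → ℝ} (hp : IsDist p) : Nonempty A := by
  by_contra h
  rw [not_nonempty_iff] at h
  simpa using hp.2

lemma isDist_pi {ι A : Type} [Fintype ι] [DecidableEq ι] [Fintype A] {g : ι → A → ℝ}
    (hg : ∀ i, IsDist (g i)) : IsDist fun y : ι → A => ∏ i, g i (y i) :=
  ⟨fun y => Finset.prod_nonneg fun i _ => (hg i).1 (y i), by
    rw [← Fintype.prod_sum]
    exact Finset.prod_eq_one fun i _ => (hg i).2⟩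

lemma one_sub_sum_ite_and_le {Ω : Type} [Fintype Ω] {p : Ω → ℝ} (hp : IsDist p)
    (A B D A' B' : Ω → Prop) [DecidablePred A] [DecidablePred B] [DecidablePred D]
    [DecidablePred A'] [DecidablePred B'] (hA : ∀ ω, ¬A ω → A' ω) (hB : ∀ ω, ¬B ω → B' ω) :
    1 - ∑ ω, (if A ω ∧ B ω then p ω else 0) ≤
      ∑ ω, (if ¬D ω then p ω else 0) + ∑ ω, (if D ω ∧ A' ω then p ω else 0) +
        ∑ ω, (if D ω ∧ B' ω then p ω else 0) := by
  rw [← hp.2, ← Finset.sum_sub_distrib, ← Finset.sum_add_distrib, ← Finset.sum_add_distrib]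
  refine Finset.sum_le_sum fun ω _ => ?_
  have hpω := hp.1 ω
  have hAω := hA ω
  have hBω := hB ω
  split_ifs <;> first | linarith | tauto

lemma sum_sum_ite_le_of_exclusive {κ Ω : Type*} [Fintype κ] [Fintype Ω] (S : κ → Ω → Prop)
    [∀ k ω, Decidable (S k ω)] (p : κ → Ω → ℝ) {q : Ω → ℝ} (hq : ∀ ω, 0 ≤ q ω)
    (hS : ∀ ω k k', S k ω → S k' ω → k = k') (hpq : ∀ k ω, S k ω → p k ω ≤ q ω) :
    ∑ k, ∑ ω, (if S k ω then p k ω else 0) ≤ ∑ ω, q ω := by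
  rw [Finset.sum_comm]
  refine Finset.sum_le_sum fun ω _ => ?_
  by_cases h : ∃ k, S k ω
  · obtain ⟨k, hk⟩ := h
    rw [Finset.sum_eq_single k (fun k' _ hk' => if_neg fun h' => hk' (hS ω k' k h' hk))
      (by simp), if_pos hk]
    exact hpq k ω hk
  · push Not at h
    simpa [h] using hq ω

lemma prod_le_exp_mul_prod {ι : Type*} (s : Finset ι) {a b : ι → ℝ} (ha : ∀ i ∈ s, 0 ≤ a i)
    (hb : ∀ i ∈ s, 0 ≤ b i) (hab : ∀ i ∈ s, 0 < a i → 0 < b i) {T : ℝ}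
    (hT : ∑ i ∈ s, Real.log (a i / b i) ≤ T) : ∏ i ∈ s, a i ≤ Real.exp T * ∏ i ∈ s, b i := by
  by_cases hpos : ∀ i ∈ s, 0 < a i
  · have hsplit : ∏ i ∈ s, a i = Real.exp (∑ i ∈ s, Real.log (a i / b i)) * ∏ i ∈ s, b i := by
      rw [Real.exp_sum, ← Finset.prod_mul_distrib]
      refine Finset.prod_congr rfl fun i hi => ?_
      have hbi := hab i hi (hpos i hi)
      rw [Real.exp_log (div_pos (hpos i hi) hbi), div_mul_cancel₀ _ hbi.ne']
    rw [hsplit]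
    exact mul_le_mul_of_nonneg_right (Real.exp_le_exp.2 hT) (Finset.prod_nonneg hb)
  · push Not at hpos
    obtain ⟨i, hi, hai⟩ := hpos
    rw [Finset.prod_eq_zero hi (le_antisymm hai (ha i hi))]
    exact mul_nonneg (Real.exp_pos T).le (Finset.prod_nonneg hb)

lemma exists_perm_comp_eq_of_card_fiber_eq {ι α : Type*} [Fintype ι] {g g' : ι → α}
    (h : ∀ a, Nat.card {i // g' i = a} = Nat.card {i // g i = a}) :
    ∃ σ : Equiv.Perm ι, ∀ i, g (σ i) = g' i :=
  ⟨Equiv.ofFiberEquiv fun a =>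
      Fintype.equivOfCardEq (by simpa only [Nat.card_eq_fintype_card] using h a),
    Equiv.ofFiberEquiv_map _⟩

lemma lt_sub_mul_of_not_le {n : ℕ} (hn : 0 < n) {L s γ : ℝ}
    (h : ¬(1 / (n : ℝ) * L - γ ≤ 1 / (n : ℝ) * s)) : s < L - n * γ := by
  have hnR : (0 : ℝ) < n := Nat.cast_pos.2 hn
  calc s = n * (1 / (n : ℝ) * s) := by field_simp
    _ < n * (1 / (n : ℝ) * L - γ) := mul_lt_mul_of_pos_left (not_le.1 h) hnR
    _ = L - n * γ := by field_simp

lemma isDist_Wn {α β : Type} (W : α → β → Y → ℝ) (hW : ∀ a b, IsDist (W a b)) (n : ℕ)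
    (x1 : Fin n → α) (x2 : Fin n → β) : IsDist (Wn W n x1 x2) :=
  isDist_pi fun i => hW (x1 i) (x2 i)

lemma empDist_nonneg {α β : Type} {n : ℕ} (x1 : Fin n → α) (x2 : Fin n → β) (a : α × β) :
    0 ≤ empDist x1 x2 a := by
  unfold empDist
  positivity

lemma empDist_pos {α β : Type} {n : ℕ} (x1 : Fin n → α) (x2 : Fin n → β) (i : Fin n) :
    0 < empDist x1 x2 (x1 i, x2 i) :=
  div_pos (Nat.cast_pos.2 (Finset.card_pos.2 ⟨i, by simp⟩)) (Nat.cast_pos.2 i.pos)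

lemma isDist_empDist {α β : Type} [Fintype α] [Fintype β] {n : ℕ} (hn : 0 < n)
    (x1 : Fin n → α) (x2 : Fin n → β) :
    IsDist (empDist x1 x2) := by
  refine ⟨empDist_nonneg x1 x2, ?_⟩
  have hcard := Finset.card_eq_sum_card_fiberwise (s := Finset.univ) (t := Finset.univ)
    (fun i _ => Finset.mem_univ (x1 i, x2 i))
  rw [Finset.card_univ, Fintype.card_fin] at hcard
  simp only [empDist]
  rw [← Finset.sum_div, div_eq_one_iff_eq (Nat.cast_pos.2 hn).ne']
  exact_mod_cast hcard.symm

lemma card_fiber_eq_of_empDist_eq {α β : Type} {n : ℕ} {x1 x1' : Fin n → α}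
    {x2 x2' : Fin n → β} (h : empDist x1 x2 = empDist x1' x2') (a : α × β) :
    Nat.card {i // (x1' i, x2' i) = a} = Nat.card {i // (x1 i, x2 i) = a} := by
  rcases Nat.eq_zero_or_pos n with rfl | hn
  · simp
  have ha := congrFun h a
  rw [empDist, empDist, div_left_inj' (Nat.cast_pos.2 hn).ne', Nat.cast_inj] at ha
  simp only [Nat.card_eq_fintype_card, Fintype.card_subtype]
  exact ha.symm

lemma vhProb_comp_perm (W : X1 → X2 → Y → ℝ) (P : X1 × X2 → ℝ) (n M1 M2 : ℕ) (γ : ℝ)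
    (x1 : Fin n → X1) (x2 : Fin n → X2) (σ : Equiv.Perm (Fin n)) :
    vhProb W P n M1 M2 γ (x1 ∘ σ) (x2 ∘ σ) = vhProb W P n M1 M2 γ x1 x2 := by
  have hsum (f : X1 → X2 → Y → ℝ) (y : Fin n → Y) :
      ∑ i, f (x1 (σ i)) (x2 (σ i)) (y i) = ∑ i, f (x1 i) (x2 i) (y (σ.symm i)) := by
    rw [← Equiv.sum_comp σ fun i => f (x1 i) (x2 i) (y (σ.symm i))]
    simp only [Equiv.symm_apply_apply]
  have hprod (y : Fin n → Y) :
      ∏ i, W (x1 (σ i)) (x2 (σ i)) (y i) = ∏ i, W (x1 i) (x2 i) (y (σ.symm i)) := by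
    rw [← Equiv.prod_comp σ fun i => W (x1 i) (x2 i) (y (σ.symm i))]
    simp only [Equiv.symm_apply_apply]
  unfold vhProb Wn
  refine Fintype.sum_equiv (Equiv.arrowCongr σ (Equiv.refl Y)) _ _ fun y => ?_
  simp only [Function.comp_apply, hsum, hprod, Equiv.arrowCongr_apply, Equiv.coe_refl,
    id_eq]

lemma vhProb_eq_of_empDist_eq (W : X1 → X2 → Y → ℝ) (P : X1 × X2 → ℝ) {n : ℕ} (M1 M2 : ℕ)
    (γ : ℝ) {x1 x1' : Fin n → X1} {x2 x2' : Fin n → X2}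
    (h : empDist x1 x2 = empDist x1' x2') :
    vhProb W P n M1 M2 γ x1 x2 = vhProb W P n M1 M2 γ x1' x2' := by
  obtain ⟨σ, hσ⟩ := exists_perm_comp_eq_of_card_fiber_eq (card_fiber_eq_of_empDist_eq h)
  have h1 : x1' = x1 ∘ σ := funext fun i => (congrArg Prod.fst (hσ i)).symm
  have h2 : x2' = x2 ∘ σ := funext fun i => (congrArg Prod.snd (hσ i)).symm
  rw [h1, h2, vhProb_comp_perm]

lemma PYdist_nonneg {W : X1 → X2 → Y → ℝ} (hW : ∀ a b, IsDist (W a b)) {P : X1 × X2 → ℝ}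
    (hP : ∀ a, 0 ≤ P a) (y : Y) : 0 ≤ PYdist W P y :=
  Finset.sum_nonneg fun x _ => mul_nonneg (hP x) ((hW _ _).1 y)

lemma PYdist_pos {W : X1 → X2 → Y → ℝ} (hW : ∀ a b, IsDist (W a b)) {P : X1 × X2 → ℝ}
    (hP : ∀ a, 0 ≤ P a) {a1 : X1} {a2 : X2} {y : Y} (ha : 0 < P (a1, a2))
    (hw : 0 < W a1 a2 y) : 0 < PYdist W P y :=
  Finset.sum_pos' (fun x _ => mul_nonneg (hP x) ((hW _ _).1 y))
    ⟨(a1, a2), Finset.mem_univ _, mul_pos ha hw⟩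

lemma isDist_PYdist {W : X1 → X2 → Y → ℝ} (hW : ∀ a b, IsDist (W a b)) {P : X1 × X2 → ℝ}
    (hP : IsDist P) : IsDist (PYdist W P) := by
  refine ⟨PYdist_nonneg hW hP.1, ?_⟩
  simp only [PYdist]
  rw [Finset.sum_comm]
  simp [← Finset.mul_sum, (hW _ _).2, hP.2]

lemma PYgX2_pos {W : X1 → X2 → Y → ℝ} (hW : ∀ a b, IsDist (W a b)) {P : X1 × X2 → ℝ}
    (hP : ∀ a, 0 ≤ P a) {a1 : X1} {a2 : X2} {y : Y} (ha : 0 < P (a1, a2))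
    (hw : 0 < W a1 a2 y) : 0 < PYgX2 W P a2 y :=
  div_pos
    (Finset.sum_pos' (fun _ _ => mul_nonneg (hP _) ((hW _ _).1 y))
      ⟨a1, Finset.mem_univ _, mul_pos ha hw⟩)
    (Finset.sum_pos' (fun _ _ => hP _) ⟨a1, Finset.mem_univ _, ha⟩)

lemma isDist_PYgX2 {W : X1 → X2 → Y → ℝ} (hW : ∀ a b, IsDist (W a b)) {P : X1 × X2 → ℝ}
    (hP : ∀ a, 0 ≤ P a) {a2 : X2} (h : 0 < ∑ a1, P (a1, a2)) : IsDist (PYgX2 W P a2) := by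
  refine ⟨fun y => div_nonneg (Finset.sum_nonneg fun _ _ => mul_nonneg (hP _) ((hW _ _).1 y))
    h.le, ?_⟩
  simp only [PYgX2]
  rw [← Finset.sum_div, Finset.sum_comm]
  simp [← Finset.mul_sum, (hW _ _).2, h.ne']

section Code

variable (W : X1 → X2 → Y → ℝ) {n M1 M2 : ℕ} (c : MACCode X1 X2 Y n M1 M2)

def decodedMass (m : Fin M1 × Fin M2) (E : (Fin n → Y) → Prop) [DecidablePred E] : ℝ :=
  ∑ y, if c.dec y = m ∧ E y then Wn W n (c.f1 m) (c.f2 m.2) y else 0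

variable {W}

lemma sum_decodedMass_le_exp (hW : ∀ a b, IsDist (W a b)) {κ : Type} [Fintype κ]
    {msg : κ → Fin M1 × Fin M2} (hmsg : Function.Injective msg) {g : Fin n → Y → ℝ}
    (hg : ∀ i, IsDist (g i))
    (hWg : ∀ k i b, 0 < W (c.f1 (msg k) i) (c.f2 (msg k).2 i) b → 0 < g i b) (T : ℝ) :
    ∑ k, decodedMass W c (msg k) (fun y =>
      ∑ i, Real.log (W (c.f1 (msg k) i) (c.f2 (msg k).2 i) (y i) / g i (y i)) < T) ≤
      Real.exp T :=
  calc _ ≤ ∑ y, Real.exp T * ∏ i, g i (y i) :=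
        sum_sum_ite_le_of_exclusive _ _
          (fun y => mul_nonneg (Real.exp_pos T).le ((isDist_pi hg).1 y))
          (fun _ _ _ h h' => hmsg (h.1.symm.trans h'.1))
          (fun k _ h => prod_le_exp_mul_prod _ (fun _ _ => (hW _ _).1 _)
            (fun i _ => (hg i).1 _) (fun i _ => hWg k i _) h.2.le)
    _ = Real.exp T := by rw [← Finset.mul_sum, (isDist_pi hg).2, mul_one]

lemma sum_decodedMass_j1_lt_le (hW : ∀ a b, IsDist (W a b)) (hM1 : 0 < M1) {P : X1 × X2 → ℝ}
    (hcc : ∀ m : Fin M1 × Fin M2, empDist (c.f1 m) (c.f2 m.2) = P) (γ : ℝ) :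
    ∑ m, decodedMass W c m (fun y =>
      ∑ i, j1 W P (c.f1 m i) (c.f2 m.2 i) (y i) < Real.log M1 - n * γ) ≤
      M1 * M2 * Real.exp (-(n * γ)) := by
  have hP : ∀ m i, 0 < P (c.f1 m i, c.f2 m.2 i) := fun m i => hcc m ▸ empDist_pos _ _ i
  rw [Fintype.sum_prod_type_right]
  calc _ ≤ ∑ _m2 : Fin M2, (M1 : ℝ) * Real.exp (-(n * γ)) := Finset.sum_le_sum fun m2 _ => ?_
    _ = M1 * M2 * Real.exp (-(n * γ)) := by
      simp only [Finset.sum_const, Finset.card_univ, Fintype.card_fin, nsmul_eq_mul]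
      ring
  have hP0 : ∀ a, 0 ≤ P a := hcc (⟨0, hM1⟩, m2) ▸ empDist_nonneg _ _
  -- the auxiliary output law `∏ᵢ P_{Y|X₂}(·|x₂ᵢ)` only depends on the common message `m2`
  have hbound := sum_decodedMass_le_exp c hW (msg := fun m1 => (m1, m2))
    (fun _ _ h => congrArg Prod.fst h)
    (fun i => isDist_PYgX2 hW hP0
      (Finset.sum_pos' (fun _ _ => hP0 _) ⟨_, Finset.mem_univ _, hP (⟨0, hM1⟩, m2) i⟩))
    (fun k i _ hw => PYgX2_pos hW hP0 (hP (k, m2) i) hw) (Real.log M1 - n * γ)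
  rwa [Real.exp_sub, Real.exp_log (Nat.cast_pos.2 hM1), div_eq_mul_inv, ← Real.exp_neg]
    at hbound

lemma sum_decodedMass_j12_lt_le (hW : ∀ a b, IsDist (W a b)) (hn : 0 < n) (hM1 : 0 < M1)
    (hM2 : 0 < M2) {P : X1 × X2 → ℝ}
    (hcc : ∀ m : Fin M1 × Fin M2, empDist (c.f1 m) (c.f2 m.2) = P) (γ : ℝ) :
    ∑ m, decodedMass W c m (fun y =>
      ∑ i, j12 W P (c.f1 m i) (c.f2 m.2 i) (y i) < Real.log M1 + Real.log M2 - n * γ) ≤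
      M1 * M2 * Real.exp (-(n * γ)) := by
  have hP : ∀ m i, 0 < P (c.f1 m i, c.f2 m.2 i) := fun m i => hcc m ▸ empDist_pos _ _ i
  have hPdist : IsDist P := hcc (⟨0, hM1⟩, ⟨0, hM2⟩) ▸ isDist_empDist hn _ _
  have hbound := sum_decodedMass_le_exp c hW (msg := fun m => m) Function.injective_id
    (fun _ => isDist_PYdist hW hPdist) (fun m i _ hw => PYdist_pos hW hPdist.1 (hP m i) hw)
    (Real.log M1 + Real.log M2 - n * γ)
  rwa [Real.exp_sub, Real.exp_add, Real.exp_log (Nat.cast_pos.2 hM1),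
    Real.exp_log (Nat.cast_pos.2 hM2), div_eq_mul_inv, ← Real.exp_neg] at hbound

lemma one_sub_vhProb_le (hW : ∀ a b, IsDist (W a b)) (hn : 0 < n) (P : X1 × X2 → ℝ) (γ : ℝ)
    (m : Fin M1 × Fin M2) :
    1 - vhProb W P n M1 M2 γ (c.f1 m) (c.f2 m.2) ≤ errProb W c m +
      decodedMass W c m (fun y =>
        ∑ i, j1 W P (c.f1 m i) (c.f2 m.2 i) (y i) < Real.log M1 - n * γ) +
      decodedMass W c m (fun y =>
        ∑ i, j12 W P (c.f1 m i) (c.f2 m.2 i) (y i) < Real.log M1 + Real.log M2 - n * γ) :=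
  one_sub_sum_ite_and_le (isDist_Wn W hW n _ _) _ _ (fun y => c.dec y = m) _ _
    (fun _ h => lt_sub_mul_of_not_le hn h)
    (fun _ h => lt_sub_mul_of_not_le hn (by rwa [← mul_add] at h))

end Code

lemma mul_one_sub_vhProb_le_sum_errProb {W : X1 → X2 → Y → ℝ} (hW : ∀ a b, IsDist (W a b))
    {n M1 M2 : ℕ} (hn : 0 < n) (hM1 : 0 < M1) (hM2 : 0 < M2) (c : MACCode X1 X2 Y n M1 M2)
    {P : X1 × X2 → ℝ} (hcc : ∀ m : Fin M1 × Fin M2, empDist (c.f1 m) (c.f2 m.2) = P) (γ : ℝ)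
    {x1 : Fin n → X1} {x2 : Fin n → X2} (hx : empDist x1 x2 = P) :
    M1 * M2 * (1 - vhProb W P n M1 M2 γ x1 x2 - 2 * Real.exp (-(n * γ))) ≤
      ∑ m, errProb W c m := by
  have hv : ∀ m : Fin M1 × Fin M2,
      vhProb W P n M1 M2 γ (c.f1 m) (c.f2 m.2) = vhProb W P n M1 M2 γ x1 x2 :=
    fun m => vhProb_eq_of_empDist_eq W P M1 M2 γ ((hcc m).trans hx.symm)
  have hsum := Finset.sum_le_sum fun m (_ : m ∈ Finset.univ) =>
    one_sub_vhProb_le c hW hn P γ m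
  simp only [hv, Finset.sum_add_distrib, Finset.sum_const, Finset.card_univ, Fintype.card_prod,
    Fintype.card_fin, nsmul_eq_mul, Nat.cast_mul] at hsum
  have h1 := sum_decodedMass_j1_lt_le c hW hM1 hcc γ
  have h2 := sum_decodedMass_j12_lt_le c hW hn hM1 hM2 hcc γ
  linarith

theorem vh_converse_constant_composition_general
    (W : X1 → X2 → Y → ℝ) (hW : ∀ x1 x2, IsDist (W x1 x2))
    {n M1 M2 : ℕ} (c : MACCode X1 X2 Y n M1 M2) (P : X1 × X2 → ℝ)
    (hcc : ∀ m : Fin M1 × Fin M2, empDist (c.f1 m) (c.f2 m.2) = P)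
    (γ : ℝ) :
    (∀ (x1 : Fin n → X1) (x2 : Fin n → X2), empDist x1 x2 = P →
      1 - vhProb W P n M1 M2 γ x1 x2 - 2 * Real.exp (-(n * γ)) ≤ avgErr W c) ∧
    (∀ (x1 : Fin n → X1) (x2 : Fin n → X2) (x1' : Fin n → X1) (x2' : Fin n → X2),
      empDist x1 x2 = P → empDist x1' x2' = P →
      vhProb W P n M1 M2 γ x1 x2 = vhProb W P n M1 M2 γ x1' x2') := by
  refine ⟨fun x1 x2 hx => ?_, fun x1 x2 x1' x2' hx hx' =>
    vhProb_eq_of_empDist_eq W P M1 M2 γ (hx.trans hx'.symm)⟩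
  have hWn := isDist_Wn W hW n
  rcases Nat.eq_zero_or_pos n with rfl | hn
  · have hvh : 0 ≤ vhProb W P 0 M1 M2 γ x1 x2 :=
      Finset.sum_nonneg fun y _ => ite_nonneg ((hWn x1 x2).1 y) le_rfl
    have herr : 0 ≤ avgErr W c := mul_nonneg (by positivity) (Finset.sum_nonneg fun m _ =>
      Finset.sum_nonneg fun y _ => ite_nonneg ((hWn _ _).1 y) le_rfl)
    simp only [CharP.cast_eq_zero, zero_mul, neg_zero, Real.exp_zero]
    linarith
  obtain ⟨y⟩ := (hW (x1 ⟨0, hn⟩) (x2 ⟨0, hn⟩)).nonempty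
  have hM1 : 0 < M1 := (c.dec fun _ => y).1.pos
  have hM2 : 0 < M2 := (c.dec fun _ => y).2.pos
  rw [avgErr, one_div, ← div_eq_inv_mul, le_div_iff₀ (by positivity), mul_comm]
  exact mul_one_sub_vhProb_le_sum_errProb hW hn hM1 hM2 c hcc γ hx

/-- **Verdú–Han-type converse bound** for constant-composition codes for the DM-MAC with
degraded message sets: for any `γ > 0` and any `(x₁,x₂)` of the common joint type `P`,
`ε_n ≥ 1 - Pr[(1/n)Σᵢ j(x_{1,i},x_{2,i},Y_i) ≥ R_n - γ𝟏] - 2e^{-nγ}`, and the probability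
is the same for all pairs of joint type `P`. -/
theorem vh_converse_constant_composition
    (W : X1 → X2 → Y → ℝ) (hW : ∀ x1 x2, IsDist (W x1 x2))
    {n M1 M2 : ℕ} (c : MACCode X1 X2 Y n M1 M2) (P : X1 × X2 → ℝ)
    (hcc : ∀ m : Fin M1 × Fin M2, empDist (c.f1 m) (c.f2 m.2) = P)
    (γ : ℝ) (hγ : 0 < γ) :
    (∀ (x1 : Fin n → X1) (x2 : Fin n → X2), empDist x1 x2 = P →
      1 - vhProb W P n M1 M2 γ x1 x2 - 2 * Real.exp (-(n * γ)) ≤ avgErr W c) ∧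
    (∀ (x1 : Fin n → X1) (x2 : Fin n → X2) (x1' : Fin n → X1) (x2' : Fin n → X2),
      empDist x1 x2 = P → empDist x1' x2' = P →
      vhProb W P n M1 M2 γ x1 x2 = vhProb W P n M1 M2 γ x1' x2') :=
  vh_converse_constant_composition_general W hW c P hcc γ
end
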